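/- arXiv:2001.08468 — 3 statements merged into one kernel-verified Lean document; each statement's English description precedes it below -/
import Mathlib

section
/- Let I be the padded instance of an SMI instance I', and define Y(i, j) for 0 ≤ i, j ≤ n + 1 by: Y(0, 0) = 1; Y(0, j) = −∞ for 1 ≤ j ≤ n + 1; Y(i, 0) = −∞ for 1 ≤ i ≤ n + 1; and for 1 ≤ i, j ≤ n + 1, Y(i, j) = 1 + max{ Y(i', j') : 0 ≤ i' ≤ i − 1, 0 ≤ j' ≤ j − 1, (m_{i'}, w_{j'}) is an acceptable pair, and (m_i, w_j) and (m_{i'}, w_{j'}) are nonconflicting } if (m_i, w_j) is an acceptable pair (with max over the empty set defined as −∞ and −∞ + 1 = −∞), and Y(i, j) = −∞ if (m_i, w_j) is not acceptable. Then Y(i, j) = X(i, j) for all i, j with 0 ≤ i ≤ n + 1 and 0 ≤ j ≤ n + 1. -/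
/-!
`Y` computes `X` because semi-WSNMs decompose along their maximum pair. Removing the maximum
pair `q` of a semi-WSNM with at least two pairs leaves a semi-WSNM whose maximum pair `p` is
acceptable and not in conflict with `q`; conversely, putting an acceptable pair `q` that is not
in conflict with `p` on top of a semi-WSNM with maximum pair `p` gives a semi-WSNM with maximum
pair `q`. In both directions, a noncrossing blocking pair that would spoil the result lies
between `p` and `q` and blocks `{p, q}`, which is exactly what nonconflicting excludes. In the
padded instance `(m₀, w₀)` belongs to every semi-WSNM, so removal applies to every semi-WSNM
whose maximum pair is not `(m₀, w₀)`.
-/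

open scoped Classical

/-- An SMTI instance: men of type `Mty`, women of type `Wty`.
`mpref m w = some r` means `w` appears on `m`'s preference list with rank `r`
(smaller rank = more preferred; equal ranks = tied); `none` means `w` is not on `m`'s list.
Similarly for `wpref`.  A pair is acceptable when each lists the other. -/
structure SMTI (Mty : Type) (Wty : Type) where
  mpref : Mty → Wty → Option ℕ
  wpref : Wty → Mty → Option ℕ

namespace SMTI

variable {Mty Wty : Type}

/-- Rank of an optional preference-list entry: `⊤` for an absent entry
(so that being single / unacceptable is worse than any listed partner). -/
def rk (o : Option ℕ) : ℕ∞ := o.elim ⊤ (fun r => (r : ℕ∞))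

/-- `(m, w)` is an acceptable pair. -/
def Acc (I : SMTI Mty Wty) (m : Mty) (w : Wty) : Prop :=
  (I.mpref m w).isSome ∧ (I.wpref w m).isSome

/-- `M` is a matching: a set of acceptable pairs in which each person appears at most once. -/
def IsMatching (I : SMTI Mty Wty) (M : Finset (Mty × Wty)) : Prop :=
  (∀ p ∈ M, I.Acc p.1 p.2) ∧
  (∀ p ∈ M, ∀ q ∈ M, (p.1 = q.1 ∨ p.2 = q.2) → p = q)

/-- Two pairs cross iff one pair's man is above the other pair's man
while its woman is below the other pair's woman. -/
def Crossing [Preorder Mty] [Preorder Wty] (p q : Mty × Wty) : Prop :=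
  (p.1 < q.1 ∧ q.2 < p.2) ∨ (q.1 < p.1 ∧ p.2 < q.2)

/-- A set of pairs is noncrossing if no two of its pairs cross. -/
def Noncrossing [Preorder Mty] [Preorder Wty] (M : Finset (Mty × Wty)) : Prop :=
  ∀ p ∈ M, ∀ q ∈ M, ¬ Crossing p q

/-- `(m, w)` is a (weak) blocking pair for `M`: an acceptable pair not in `M`
such that `m` strictly prefers `w` to his partner in `M` (or is single) and
`w` strictly prefers `m` to her partner in `M` (or is single). -/
def Blocks (I : SMTI Mty Wty) (M : Finset (Mty × Wty)) (m : Mty) (w : Wty) : Prop :=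
  I.Acc m w ∧ (m, w) ∉ M ∧
  (∀ w', (m, w') ∈ M → rk (I.mpref m w) < rk (I.mpref m w')) ∧
  (∀ m', (m', w) ∈ M → rk (I.wpref w m) < rk (I.wpref w m'))

/-- A noncrossing (weak) blocking pair: a blocking pair crossing no pair of `M`. -/
def NCBlocks [Preorder Mty] [Preorder Wty] (I : SMTI Mty Wty) (M : Finset (Mty × Wty))
    (m : Mty) (w : Wty) : Prop :=
  I.Blocks M m w ∧ ∀ q ∈ M, ¬ Crossing (m, w) q

/-- A strongly stable noncrossing matching (for SMTI in the weak-stability sense: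
a weak-SSNM): a noncrossing matching admitting no (weak) blocking pair at all. -/
def IsSSNM [Preorder Mty] [Preorder Wty] (I : SMTI Mty Wty) (M : Finset (Mty × Wty)) : Prop :=
  I.IsMatching M ∧ Noncrossing M ∧ ∀ m w, ¬ I.Blocks M m w

/-- A weakly stable noncrossing matching: a noncrossing matching admitting
no noncrossing (weak) blocking pair. -/
def IsWSNM [Preorder Mty] [Preorder Wty] (I : SMTI Mty Wty) (M : Finset (Mty × Wty)) : Prop :=
  I.IsMatching M ∧ Noncrossing M ∧ ∀ m w, ¬ I.NCBlocks M m w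

/-- The instance has strict preference lists (no ties), i.e. it is an SMI instance. -/
def NoTies (I : SMTI Mty Wty) : Prop :=
  (∀ m w w', (I.mpref m w).isSome → I.mpref m w = I.mpref m w' → w = w') ∧
  (∀ w m m', (I.wpref w m).isSome → I.wpref w m = I.wpref w m' → m = m')

end SMTI

namespace SMTI

variable {Mty Wty : Type}

/-- `opt I`: the maximum cardinality of a WSNM of `I`. -/
noncomputable def opt [Preorder Mty] [Preorder Wty] (I : SMTI Mty Wty) : ℕ :=
  sSup {k | ∃ M, I.IsWSNM M ∧ M.card = k}

/-- `p` is the maximum pair of `M`:  it belongs to `M` and dominates every pair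
of `M` in both coordinates. -/
def IsMaxPair [Preorder Mty] [Preorder Wty] (M : Finset (Mty × Wty)) (p : Mty × Wty) : Prop :=
  p ∈ M ∧ ∀ q ∈ M, q.1 ≤ p.1 ∧ q.2 ≤ p.2

/-- `M` is a semi-WSNM with maximum pair `p`: a noncrossing matching whose maximum
pair is `p` and all of whose noncrossing blocking pairs lie (weakly) beyond `p` in
both coordinates. -/
def IsSemiWSNMWith [Preorder Mty] [Preorder Wty] (I : SMTI Mty Wty)
    (M : Finset (Mty × Wty)) (p : Mty × Wty) : Prop :=
  I.IsMatching M ∧ Noncrossing M ∧ IsMaxPair M p ∧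
    ∀ m w, I.NCBlocks M m w → p.1 ≤ m ∧ p.2 ≤ w

/-- `M` is a semi-WSNM (with some maximum pair). -/
def IsSemiWSNM [Preorder Mty] [Preorder Wty] (I : SMTI Mty Wty)
    (M : Finset (Mty × Wty)) : Prop :=
  ∃ p, I.IsSemiWSNMWith M p

/-- The padded instance: new man `m₀` and woman `w₀` on top, new man `m_{n+1}` and
woman `w_{n+1}` at the bottom; `m₀` and `w₀` list only each other, and so do
`m_{n+1}` and `w_{n+1}`; all other lists are as in the original instance
(original person `i`, `1 ≤ i ≤ n`, becomes index `i` of `Fin (n+2)`). -/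
def padded {n : ℕ} (I : SMTI (Fin n) (Fin n)) : SMTI (Fin (n + 2)) (Fin (n + 2)) where
  mpref m w :=
    if hm : 0 < m.val ∧ m.val < n + 1 then
      if hw : 0 < w.val ∧ w.val < n + 1 then
        I.mpref ⟨m.val - 1, by omega⟩ ⟨w.val - 1, by omega⟩
      else none
    else if (m.val = 0 ∧ w.val = 0) ∨ (m.val = n + 1 ∧ w.val = n + 1) then some 0
    else none
  wpref w m :=
    if hw : 0 < w.val ∧ w.val < n + 1 then
      if hm : 0 < m.val ∧ m.val < n + 1 then
        I.wpref ⟨w.val - 1, by omega⟩ ⟨m.val - 1, by omega⟩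
      else none
    else if (m.val = 0 ∧ w.val = 0) ∨ (m.val = n + 1 ∧ w.val = n + 1) then some 0
    else none

/-- The embedding of a pair of the original instance into the padded instance. -/
def emb {n : ℕ} (p : Fin n × Fin n) : Fin (n + 2) × Fin (n + 2) :=
  (⟨p.1.val + 1, by omega⟩, ⟨p.2.val + 1, by omega⟩)

/-- Pairs `p` and `q` (with `p.1 < q.1` and `p.2 < q.2`) are conflicting if the
matching `{p, q}` admits a blocking pair lying between them in both coordinates. -/
def Conflicting {nm nw : ℕ} (I : SMTI (Fin nm) (Fin nw)) (p q : Fin nm × Fin nw) : Prop :=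
  ∃ s t, I.Blocks {p, q} s t ∧ p.1 ≤ s ∧ s ≤ q.1 ∧ p.2 ≤ t ∧ t ≤ q.2

/-- `X I i j`: the maximum size of a semi-WSNM of `I` with maximum pair `(m_i, w_j)`,
or `⊥` (i.e. `−∞`) if none exists. -/
noncomputable def X {nm nw : ℕ} (I : SMTI (Fin nm) (Fin nw)) (i : Fin nm) (j : Fin nw) :
    WithBot ℕ :=
  if ∃ M, I.IsSemiWSNMWith M (i, j) then
    ((sSup {k | ∃ M, I.IsSemiWSNMWith M (i, j) ∧ M.card = k} : ℕ) : WithBot ℕ)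
  else ⊥

end SMTI

open Classical in
/-- The dynamic-programming quantity `Y`:
`Y 0 0 = 1`; `Y 0 (j+1) = ⊥`; `Y (i+1) 0 = ⊥`; and for `1 ≤ i, j ≤ n+1`,
`Y i j = 1 + max { Y i' j' : i' < i, j' < j, (m_{i'}, w_{j'}) acceptable, and
(m_i, w_j), (m_{i'}, w_{j'}) nonconflicting }` if `(m_i, w_j)` is acceptable
(the max over the empty set being `⊥`, with `1 + ⊥ = ⊥`), and `⊥` otherwise. -/
noncomputable def Y {n : ℕ} (I : SMTI (Fin (n + 2)) (Fin (n + 2))) : ℕ → ℕ → WithBot ℕ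
  | 0, 0 => 1
  | 0, _ + 1 => ⊥
  | _ + 1, 0 => ⊥
  | i + 1, j + 1 =>
    if hi : i + 1 < n + 2 then
      if hj : j + 1 < n + 2 then
        if I.Acc ⟨i + 1, hi⟩ ⟨j + 1, hj⟩ then
          1 + (Finset.univ.sup fun q : Fin (i + 1) × Fin (j + 1) =>
            if I.Acc ⟨q.1.val, lt_trans q.1.isLt hi⟩ ⟨q.2.val, lt_trans q.2.isLt hj⟩ ∧
                ¬ I.Conflicting (⟨q.1.val, lt_trans q.1.isLt hi⟩, ⟨q.2.val, lt_trans q.2.isLt hj⟩)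
                  (⟨i + 1, hi⟩, ⟨j + 1, hj⟩)
            then Y I q.1.val q.2.val else ⊥)
        else ⊥
      else ⊥
    else ⊥
  termination_by i j => i + j
  decreasing_by
    have h1 := q.1.isLt
    have h2 := q.2.isLt
    omega
namespace SMTI

section Matching

variable {Mty Wty : Type} {I : SMTI Mty Wty} {M N : Finset (Mty × Wty)}

lemma IsMatching.mono (h : I.IsMatching M) (hNM : N ⊆ M) : I.IsMatching N :=
  ⟨fun p hp => h.1 p (hNM hp), fun p hp q hq => h.2 p (hNM hp) q (hNM hq)⟩

lemma IsMatching.insert [DecidableEq (Mty × Wty)] (h : I.IsMatching M) {q : Mty × Wty}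
    (hq : I.Acc q.1 q.2) (hfree : ∀ r ∈ M, r.1 ≠ q.1 ∧ r.2 ≠ q.2) :
    I.IsMatching (insert q M) := by
  refine ⟨(Finset.forall_mem_insert _ _ _).2 ⟨hq, h.1⟩, fun p hp r hr hpr => ?_⟩
  rw [Finset.mem_insert] at hp hr
  rcases hp with rfl | hp <;> rcases hr with rfl | hr
  · rfl
  · have := hfree r hr
    rcases hpr with e | e
    exacts [absurd e.symm this.1, absurd e.symm this.2]
  · have := hfree p hp
    rcases hpr with e | e
    exacts [absurd e this.1, absurd e this.2]
  · exact h.2 p hp r hr hpr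

lemma Blocks.of_partners_mem {s : Mty} {t : Wty} (h : I.Blocks N s t)
    (hpartners : ∀ r ∈ M, r.1 = s ∨ r.2 = t → r ∈ N) : I.Blocks M s t :=
  ⟨h.1, fun hst => h.2.1 (hpartners _ hst (Or.inl rfl)),
    fun w hw => h.2.2.1 w (hpartners _ hw (Or.inl rfl)),
    fun m hm => h.2.2.2 m (hpartners _ hm (Or.inr rfl))⟩

lemma Blocks.mono {s : Mty} {t : Wty} (h : I.Blocks N s t) (hMN : M ⊆ N) : I.Blocks M s t :=
  h.of_partners_mem fun _ hr _ => hMN hr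

end Matching

section Order

variable {Mty Wty : Type} [LinearOrder Mty] [LinearOrder Wty]

lemma not_crossing_of_le {p q : Mty × Wty} (h1 : p.1 ≤ q.1) (h2 : p.2 ≤ q.2) :
    ¬ Crossing p q := by
  rintro (⟨-, h⟩ | ⟨h, -⟩)
  · exact h2.not_gt h
  · exact h1.not_gt h

lemma le_of_not_crossing {p q : Mty × Wty} (h : ¬ Crossing p q)
    (hle : ¬ (q.1 ≤ p.1 ∧ q.2 ≤ p.2)) : p.1 ≤ q.1 ∧ p.2 ≤ q.2 := by
  simp only [Crossing, not_or, not_and, not_lt, not_le] at h hle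
  rcases lt_or_ge p.1 q.1 with h1 | h1
  · exact ⟨h1.le, h.1 h1⟩
  · have h2 := hle h1
    exact ⟨not_lt.1 fun h' => (h.2 h').not_gt h2, h2.le⟩

variable {I : SMTI Mty Wty} {M N : Finset (Mty × Wty)}

lemma Noncrossing.mono (h : Noncrossing M) (hNM : N ⊆ M) : Noncrossing N :=
  fun p hp q hq => h p (hNM hp) q (hNM hq)

lemma Noncrossing.insert [DecidableEq (Mty × Wty)] (h : Noncrossing M) {q : Mty × Wty}
    (hq : ∀ r ∈ M, ¬ Crossing q r) : Noncrossing (insert q M) := by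
  intro p hp r hr
  rw [Finset.mem_insert] at hp hr
  rcases hp with rfl | hp <;> rcases hr with rfl | hr
  · exact not_crossing_of_le le_rfl le_rfl
  · exact hq r hr
  · exact fun hc => hq p hp (Or.comm.1 hc)
  · exact h p hp r hr

lemma IsMaxPair.lt {p q : Mty × Wty} (hmax : IsMaxPair M p) (hM : I.IsMatching M) (hq : q ∈ M)
    (hqp : q ≠ p) : q.1 < p.1 ∧ q.2 < p.2 :=
  ⟨(hmax.2 q hq).1.lt_of_ne fun e => hqp (hM.2 q hq p hmax.1 (Or.inl e)),
    (hmax.2 q hq).2.lt_of_ne fun e => hqp (hM.2 q hq p hmax.1 (Or.inr e))⟩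

lemma exists_isMaxPair (hM : I.IsMatching M) (hnc : Noncrossing M) (hne : M.Nonempty) :
    ∃ p, IsMaxPair M p := by
  obtain ⟨p, hp, hmax⟩ := M.exists_max_image Prod.fst hne
  refine ⟨p, hp, fun r hr => ⟨hmax r hr, not_lt.1 fun hlt => ?_⟩⟩
  rcases (hmax r hr).lt_or_eq with h | h
  · exact hnc r hr p hp (Or.inl ⟨h, hlt⟩)
  · rw [hM.2 r hr p hp (Or.inl h)] at hlt
    exact lt_irrefl _ hlt

end Order

section SemiWSNM

variable {a b : ℕ} {I : SMTI (Fin a) (Fin b)} {M : Finset (Fin a × Fin b)} {p q : Fin a × Fin b}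

lemma IsSemiWSNMWith.insert_of_not_conflicting (h : I.IsSemiWSNMWith M p) (h1 : p.1 < q.1)
    (h2 : p.2 < q.2) (hacc : I.Acc q.1 q.2) (hnc : ¬ I.Conflicting p q) :
    I.IsSemiWSNMWith (insert q M) q := by
  obtain ⟨hmat, hncr, hmax, hblk⟩ := h
  have hlt : ∀ r ∈ M, r.1 < q.1 ∧ r.2 < q.2 := fun r hr =>
    ⟨(hmax.2 r hr).1.trans_lt h1, (hmax.2 r hr).2.trans_lt h2⟩
  refine ⟨hmat.insert hacc fun r hr => ⟨(hlt r hr).1.ne, (hlt r hr).2.ne⟩,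
    hncr.insert fun r hr hc => not_crossing_of_le (hlt r hr).1.le (hlt r hr).2.le (Or.comm.1 hc),
    ⟨Finset.mem_insert_self _ _, ?_⟩, fun s t hst => ?_⟩
  · rw [Finset.forall_mem_insert]
    exact ⟨⟨le_rfl, le_rfl⟩, fun r hr => ⟨(hlt r hr).1.le, (hlt r hr).2.le⟩⟩
  by_contra hge
  have hle := le_of_not_crossing (hst.2 q (Finset.mem_insert_self _ _)) hge
  have hM : I.NCBlocks M s t :=
    ⟨hst.1.mono (Finset.subset_insert _ _), fun r hr => hst.2 r (Finset.mem_insert_of_mem hr)⟩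
  have hpq : ({p, q} : Finset _) ⊆ insert q M :=
    Finset.insert_subset (Finset.mem_insert_of_mem hmax.1) (by simp)
  obtain ⟨hps, hpt⟩ := hblk s t hM
  exact hnc ⟨s, t, hst.1.mono hpq, hps, hle.1, hpt, hle.2⟩

lemma IsSemiWSNMWith.not_conflicting (h : I.IsSemiWSNMWith M q) (hp : p ∈ M)
    (hbelow : ∀ r ∈ M, r ≠ q → r.1 ≤ p.1 ∧ r.2 ≤ p.2) : ¬ I.Conflicting p q := by
  obtain ⟨hmat, -, hmax, hblk⟩ := h
  rintro ⟨s, t, hb, hps, hsq, hpt, htq⟩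
  have hpartners : ∀ r ∈ M, r.1 = s ∨ r.2 = t → r ∈ ({p, q} : Finset _) := by
    intro r hr hrst
    by_cases hrq : r = q
    · simp [hrq]
    obtain ⟨hrp1, hrp2⟩ := hbelow r hr hrq
    refine Finset.mem_insert.2 (Or.inl (hmat.2 r hr p hp ?_))
    rcases hrst with e | e
    exacts [Or.inl (hrp1.antisymm (e ▸ hps)), Or.inr (hrp2.antisymm (e ▸ hpt))]
  have hnc : ∀ r ∈ M, ¬ Crossing (s, t) r := by
    intro r hr hc
    by_cases hrq : r = q
    · exact not_crossing_of_le hsq htq (hrq ▸ hc)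
    · obtain ⟨hrp1, hrp2⟩ := hbelow r hr hrq
      exact not_crossing_of_le (hrp1.trans hps) (hrp2.trans hpt) (Or.comm.1 hc)
  obtain ⟨hqs, hqt⟩ := hblk s t ⟨hb.of_partners_mem hpartners, hnc⟩
  have hstq : (s, t) = q := Prod.ext (hsq.antisymm hqs) (htq.antisymm hqt)
  exact hb.2.1 (by simp [hstq])

lemma IsSemiWSNMWith.exists_erase (h : I.IsSemiWSNMWith M q) (hcard : 2 ≤ M.card) :
    ∃ p, p.1 < q.1 ∧ p.2 < q.2 ∧ I.Acc p.1 p.2 ∧ ¬ I.Conflicting p q ∧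
      I.IsSemiWSNMWith (M.erase q) p := by
  obtain ⟨hmat, hncr, hmax, hblk⟩ := h
  have hsub : M.erase q ⊆ M := Finset.erase_subset _ _
  have hne : (M.erase q).Nonempty := by
    rw [← Finset.card_pos, Finset.card_erase_of_mem hmax.1]
    omega
  obtain ⟨p, hp⟩ := exists_isMaxPair (hmat.mono hsub) (hncr.mono hsub) hne
  have hpM : p ∈ M := hsub hp.1
  obtain ⟨h1, h2⟩ := hmax.lt hmat hpM (Finset.ne_of_mem_erase hp.1)
  have hbelow : ∀ r ∈ M, r ≠ q → r.1 ≤ p.1 ∧ r.2 ≤ p.2 := fun r hr hrq =>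
    hp.2 r (Finset.mem_erase.2 ⟨hrq, hr⟩)
  refine ⟨p, h1, h2, hmat.1 p hpM,
    IsSemiWSNMWith.not_conflicting ⟨hmat, hncr, hmax, hblk⟩ hpM hbelow,
    hmat.mono hsub, hncr.mono hsub, hp, fun s t hst => ?_⟩
  by_contra hge
  obtain ⟨hsp, htp⟩ := le_of_not_crossing (hst.2 p hp.1) hge
  have hs : s < q.1 := hsp.trans_lt h1
  have ht : t < q.2 := htp.trans_lt h2
  have hpartners : ∀ r ∈ M, r.1 = s ∨ r.2 = t → r ∈ M.erase q := by
    rintro r hr hrst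
    refine Finset.mem_erase.2 ⟨?_, hr⟩
    rintro rfl
    rcases hrst with e | e
    exacts [hs.ne' e, ht.ne' e]
  have hnc : ∀ r ∈ M, ¬ Crossing (s, t) r := by
    intro r hr
    by_cases hrq : r = q
    · exact hrq ▸ not_crossing_of_le hs.le ht.le
    · exact hst.2 r (Finset.mem_erase.2 ⟨hrq, hr⟩)
  exact hs.not_ge (hblk s t ⟨hst.1.of_partners_mem hpartners, hnc⟩).1

end SemiWSNM

section X

variable {a b : ℕ} {I : SMTI (Fin a) (Fin b)} {M : Finset (Fin a × Fin b)}
  {i : Fin a} {j : Fin b}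

lemma bddAbove_card_isSemiWSNMWith (i : Fin a) (j : Fin b) :
    BddAbove {k | ∃ M, I.IsSemiWSNMWith M (i, j) ∧ M.card = k} :=
  ⟨Fintype.card (Fin a × Fin b), by rintro _ ⟨M, -, rfl⟩; exact M.card_le_univ⟩

lemma card_le_X (h : I.IsSemiWSNMWith M (i, j)) : (M.card : WithBot ℕ) ≤ I.X i j := by
  rw [X, if_pos ⟨M, h⟩]
  exact_mod_cast le_csSup (bddAbove_card_isSemiWSNMWith i j) ⟨M, h, rfl⟩

lemma exists_card_eq_X (h : ∃ M, I.IsSemiWSNMWith M (i, j)) :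
    ∃ M, I.IsSemiWSNMWith M (i, j) ∧ (M.card : WithBot ℕ) = I.X i j := by
  rw [X, if_pos h]
  obtain ⟨M₀, h₀⟩ := h
  obtain ⟨M, hM, hcard⟩ :=
    Nat.sSup_mem (s := {k | ∃ M, I.IsSemiWSNMWith M (i, j) ∧ M.card = k})
      ⟨M₀.card, M₀, h₀, rfl⟩ (bddAbove_card_isSemiWSNMWith i j)
  exact ⟨M, hM, congrArg _ hcard⟩

lemma X_eq_bot (h : ¬ ∃ M, I.IsSemiWSNMWith M (i, j)) : I.X i j = ⊥ := by
  rw [X, if_neg h]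

lemma X_eq_bot_of_not_acc (h : ¬ I.Acc i j) : I.X i j = ⊥ :=
  X_eq_bot fun ⟨_, hM⟩ => h (hM.1.1 _ hM.2.2.1.1)

lemma one_add_X_le_X {i' : Fin a} {j' : Fin b} (hi : i' < i) (hj : j' < j) (hacc : I.Acc i j)
    (hnc : ¬ I.Conflicting (i', j') (i, j)) : 1 + I.X i' j' ≤ I.X i j := by
  by_cases hex : ∃ M, I.IsSemiWSNMWith M (i', j')
  · obtain ⟨M, hM, hcard⟩ := exists_card_eq_X hex
    have hij : (i, j) ∉ M := fun hm => hi.not_ge (hM.2.2.1.2 _ hm).1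
    have := card_le_X (hM.insert_of_not_conflicting hi hj hacc hnc)
    rw [Finset.card_insert_of_notMem hij, Nat.cast_succ, add_comm] at this
    rwa [← hcard]
  · simp [X_eq_bot hex]

lemma exists_card_le_one_add_X (h : I.IsSemiWSNMWith M (i, j)) (hcard : 2 ≤ M.card) :
    ∃ i' j', i' < i ∧ j' < j ∧ I.Acc i' j' ∧ ¬ I.Conflicting (i', j') (i, j) ∧
      (M.card : WithBot ℕ) ≤ 1 + I.X i' j' := by
  obtain ⟨⟨i', j'⟩, hi, hj, hacc, hnc, herase⟩ := h.exists_erase hcard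
  refine ⟨i', j', hi, hj, hacc, hnc, ?_⟩
  have := card_le_X herase
  rw [Finset.card_erase_of_mem h.2.2.1.1] at this
  calc (M.card : WithBot ℕ) = 1 + ((M.card - 1 : ℕ) : WithBot ℕ) := by
        rw [← Nat.cast_one, ← Nat.cast_add]; congr 1; omega
    _ ≤ 1 + I.X i' j' := add_le_add_right this 1

end X

section Padded

variable {n : ℕ} {I' : SMTI (Fin n) (Fin n)}

lemma padded_acc_val_eq_zero_iff {m w : Fin (n + 2)} (h : (padded I').Acc m w) :
    m.val = 0 ↔ w.val = 0 := by
  have h1 : ((padded I').mpref m w).isSome := h.1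
  simp only [padded] at h1
  split_ifs at h1 <;> first | omega | simp at h1

lemma padded_acc_zero : (padded I').Acc 0 0 := by
  simp [Acc, padded]

lemma zero_mem_of_isSemiWSNMWith_padded {M : Finset (Fin (n + 2) × Fin (n + 2))}
    {p : Fin (n + 2) × Fin (n + 2)} (h : (padded I').IsSemiWSNMWith M p) : (0, 0) ∈ M := by
  obtain ⟨hmat, -, hmax, hblk⟩ := h
  by_contra h0
  have hpartner : ∀ r ∈ M, r.1 = 0 ∨ r.2 = 0 → r = (0, 0) := by
    intro r hr hr0
    have := padded_acc_val_eq_zero_iff (hmat.1 r hr)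
    rcases hr0 with e | e
    · exact Prod.ext e (Fin.ext (this.1 (by simp [e])))
    · exact Prod.ext (Fin.ext (this.2 (by simp [e]))) e
  have hblocks : (padded I').NCBlocks M 0 0 :=
    ⟨⟨padded_acc_zero, h0, fun w hw => absurd (hpartner _ hw (Or.inl rfl) ▸ hw) h0,
      fun m hm => absurd (hpartner _ hm (Or.inr rfl) ▸ hm) h0⟩,
      fun r _ => not_crossing_of_le (Fin.zero_le _) (Fin.zero_le _)⟩
  obtain ⟨hp1, hp2⟩ := hblk 0 0 hblocks
  have hp : p = (0, 0) := Prod.ext (nonpos_iff_eq_zero.1 hp1) (nonpos_iff_eq_zero.1 hp2)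
  exact h0 (hp ▸ hmax.1)

lemma X_padded_eq_bot {m w : Fin (n + 2)} (h : ¬ (m.val = 0 ↔ w.val = 0)) :
    (padded I').X m w = ⊥ :=
  X_eq_bot_of_not_acc (mt padded_acc_val_eq_zero_iff h)

lemma two_le_card_of_isSemiWSNMWith_padded {M : Finset (Fin (n + 2) × Fin (n + 2))}
    {p : Fin (n + 2) × Fin (n + 2)} (h : (padded I').IsSemiWSNMWith M p) (hp : p ≠ (0, 0)) :
    2 ≤ M.card :=
  Finset.one_lt_card.2 ⟨_, zero_mem_of_isSemiWSNMWith_padded h, _, h.2.2.1.1, hp.symm⟩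

lemma X_padded_zero_zero : (padded I').X 0 0 = 1 := by
  have hsingle : (padded I').IsSemiWSNMWith {(0, 0)} (0, 0) :=
    ⟨⟨by simpa using padded_acc_zero, by simp⟩,
      fun p hp q hq => by
        rw [Finset.mem_singleton] at hp hq
        exact hp ▸ hq ▸ not_crossing_of_le le_rfl le_rfl,
      ⟨Finset.mem_singleton_self _, by simp⟩, fun m w _ => ⟨Fin.zero_le m, Fin.zero_le w⟩⟩
  obtain ⟨M, hM, hcard⟩ := exists_card_eq_X ⟨_, hsingle⟩
  have hM1 : M.card ≤ 1 := Finset.card_le_one.2 fun r hr r' hr' => by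
    have h1 := hM.2.2.1.2 r hr
    have h2 := hM.2.2.1.2 r' hr'
    ext <;> simp_all
  have hM0 : 0 < M.card := Finset.card_pos.2 ⟨_, hM.2.2.1.1⟩
  rw [← hcard, show M.card = 1 by omega, Nat.cast_one]

end Padded

lemma Y_succ_succ_eq_X {n : ℕ} {I : SMTI (Fin (n + 2)) (Fin (n + 2))} {i j : ℕ}
    (hi : i + 1 < n + 2) (hj : j + 1 < n + 2)
    (htwo : ∀ M, I.IsSemiWSNMWith M (⟨i + 1, hi⟩, ⟨j + 1, hj⟩) → 2 ≤ M.card)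
    (ih : ∀ i' (hi' : i' < i + 1) j' (hj' : j' < j + 1),
      Y I i' j' = I.X ⟨i', hi'.trans hi⟩ ⟨j', hj'.trans hj⟩) :
    Y I (i + 1) (j + 1) = I.X ⟨i + 1, hi⟩ ⟨j + 1, hj⟩ := by
  rw [Y, dif_pos hi, dif_pos hj]
  split_ifs with hacc
  swap
  · exact (X_eq_bot_of_not_acc hacc).symm
  apply le_antisymm
  · refine Finset.sup_induction (p := fun x => 1 + x ≤ _) (by simp) (fun x hx y hy => ?_)
      fun q _ => ?_
    · rw [← max_add_add_left]
      exact max_le hx hy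
    split_ifs with hq'
    · rw [ih _ q.1.isLt _ q.2.isLt]
      exact one_add_X_le_X q.1.isLt q.2.isLt hacc hq'.2
    · simp
  · by_cases hex : ∃ M, I.IsSemiWSNMWith M (⟨i + 1, hi⟩, ⟨j + 1, hj⟩)
    · obtain ⟨M, hM, hcard⟩ := exists_card_eq_X hex
      obtain ⟨i', j', hi', hj', hacc', hnc', hle⟩ := exists_card_le_one_add_X hM (htwo M hM)
      rw [← hcard]
      refine hle.trans (add_le_add_right ?_ 1)
      refine le_trans ?_ (Finset.le_sup (Finset.mem_univ ((⟨i', hi'⟩, ⟨j', hj'⟩) :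
        Fin (i + 1) × Fin (j + 1))))
      rw [if_pos ⟨hacc', hnc'⟩, ih _ hi' _ hj']
    · rw [X_eq_bot hex]
      exact bot_le

end SMTI

/-- `Y(i, j) = X(i, j)` for all `0 ≤ i, j ≤ n + 1` on the padded
instance of an SMI instance. -/
theorem stmt12 {n : ℕ} (I' : SMTI (Fin n) (Fin n))
    (i j : ℕ) (hi : i ≤ n + 1) (hj : j ≤ n + 1) :
    Y (SMTI.padded I') i j =
      SMTI.X (SMTI.padded I') ⟨i, by omega⟩ ⟨j, by omega⟩ := by
  induction i using Nat.strong_induction_on generalizing j with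
  | _ i ih =>
  rcases i with _ | i <;> rcases j with _ | j
  · rw [Y]
    exact SMTI.X_padded_zero_zero.symm
  · rw [Y, SMTI.X_padded_eq_bot (by simp)]
  · rw [Y, SMTI.X_padded_eq_bot (by simp)]
  · refine SMTI.Y_succ_succ_eq_X _ _
      (fun M hM => SMTI.two_le_card_of_isSemiWSNMWith_padded hM ?_)
      fun i' hi' j' hj' => ih i' hi' j' (by omega) (by omega)
    simp [Prod.ext_iff, Fin.ext_iff]
end

section
/- Let I be the padded instance of an SMI instance I', let M be a semi-WSNM of I with maximum pair (m_i, w_j) and |M| ≥ 2, let M' = M \ {(m_i, w_j)}, and let (m_x, w_y) be the maximum pair of M'. Then M' is a semi-WSNM of I with maximum pair (m_x, w_y), and the pairs (m_x, w_y) and (m_i, w_j) are nonconflicting. -/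
open scoped Classical

/-!
Everything follows from the semi-WSNM property of `M` with maximum pair `p`, and `q < p` in
both coordinates. A noncrossing blocking pair of `M.erase p` that does not lie beyond `q` must,
as it does not cross `q`, lie before `q`, hence strictly before `p`; it then blocks `M` without
crossing any pair of `M`, contradicting the semi-WSNM property. A blocking pair `(s, t)` of
`{q, p}` in the box between `q` and `p` also blocks `M`, because the only pairs of `M` sharing a
person with it are `q` and `p`; it crosses no pair of `M`, so it lies beyond `p`, i.e. it is `p`.
-/

namespace SMTI

variable {Mty Wty : Type}

section Preorder

variable [Preorder Mty] [Preorder Wty]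

theorem not_crossing_of_le_s13 {p q : Mty × Wty} (h : p ≤ q) : ¬ Crossing p q := by
  rintro (⟨-, h2⟩ | ⟨h1, -⟩)
  · exact not_lt_of_ge h.2 h2
  · exact not_lt_of_ge h.1 h1

theorem not_crossing_of_ge {p q : Mty × Wty} (h : q ≤ p) : ¬ Crossing p q := by
  rintro (⟨h1, -⟩ | ⟨-, h2⟩)
  · exact not_lt_of_ge h.1 h1
  · exact not_lt_of_ge h.2 h2

theorem Noncrossing.subset {M N : Finset (Mty × Wty)} (hM : Noncrossing M) (hNM : N ⊆ M) :
    Noncrossing N :=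
  fun p hp q hq => hM p (hNM hp) q (hNM hq)

end Preorder

theorem IsMatching.subset {I : SMTI Mty Wty} {M N : Finset (Mty × Wty)} (hM : I.IsMatching M)
    (hNM : N ⊆ M) : I.IsMatching N :=
  ⟨fun p hp => hM.1 p (hNM hp), fun p hp q hq => hM.2 p (hNM hp) q (hNM hq)⟩

theorem Blocks.of_forall_mem {I : SMTI Mty Wty} {M N : Finset (Mty × Wty)} {m : Mty} {w : Wty}
    (hb : I.Blocks N m w) (hN : ∀ r ∈ M, (r.1 = m ∨ r.2 = w) → r ∈ N) : I.Blocks M m w := by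
  obtain ⟨hacc, hnotin, hm, hw⟩ := hb
  exact ⟨hacc, fun hmem => hnotin (hN _ hmem (Or.inl rfl)),
    fun w' hw' => hm w' (hN _ hw' (Or.inl rfl)), fun m' hm' => hw m' (hN _ hm' (Or.inr rfl))⟩

section PartialOrder

variable [DecidableEq Mty] [DecidableEq Wty] [PartialOrder Mty] [PartialOrder Wty]
  {I : SMTI Mty Wty} {M : Finset (Mty × Wty)} {p q : Mty × Wty}

theorem IsMaxPair.lt_of_erase (hM : I.IsMatching M) (hp : IsMaxPair M p)
    (hq : IsMaxPair (M.erase p) q) : q.1 < p.1 ∧ q.2 < p.2 := by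
  obtain ⟨hqp, hqM⟩ := Finset.mem_erase.mp hq.1
  have hne : ¬ (q.1 = p.1 ∨ q.2 = p.2) := fun h => hqp (hM.2 q hqM p hp.1 h)
  rw [not_or] at hne
  exact ⟨lt_of_le_of_ne (hp.2 q hqM).1 hne.1, lt_of_le_of_ne (hp.2 q hqM).2 hne.2⟩

theorem NCBlocks.of_erase_of_lt {m : Mty} {w : Wty} (hb : I.NCBlocks (M.erase p) m w)
    (hm : m < p.1) (hw : w < p.2) : I.NCBlocks M m w := by
  refine ⟨hb.1.of_forall_mem fun r hr hrmw => Finset.mem_erase.mpr ⟨?_, hr⟩, fun r hr => ?_⟩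
  · rintro rfl
    rcases hrmw with h | h
    exacts [hm.ne h.symm, hw.ne h.symm]
  · by_cases hrp : r = p
    · exact hrp ▸ not_crossing_of_le_s13 (Prod.le_def.mpr ⟨hm.le, hw.le⟩)
    · exact hb.2 r (Finset.mem_erase.mpr ⟨hrp, hr⟩)

theorem mem_pair_of_isMaxPair_erase (hM : I.IsMatching M) (hq : IsMaxPair (M.erase p) q)
    {s : Mty} {t : Wty} (hqst : q ≤ (s, t)) {r : Mty × Wty} (hr : r ∈ M)
    (hrst : r.1 = s ∨ r.2 = t) : r ∈ ({q, p} : Finset (Mty × Wty)) := by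
  by_cases hrp : r = p
  · simp [hrp]
  have hr' : r ∈ M.erase p := Finset.mem_erase.mpr ⟨hrp, hr⟩
  have hrq := hq.2 r hr'
  have hshare : r.1 = q.1 ∨ r.2 = q.2 := by
    rcases hrst with rfl | rfl
    exacts [Or.inl (le_antisymm hrq.1 hqst.1), Or.inr (le_antisymm hrq.2 hqst.2)]
  simp [hM.2 r hr q (Finset.mem_of_mem_erase hq.1) hshare]

end PartialOrder

theorem IsSemiWSNMWith.erase_maxPair [DecidableEq Mty] [DecidableEq Wty] [LinearOrder Mty]
    [LinearOrder Wty] {I : SMTI Mty Wty} {M : Finset (Mty × Wty)} {p q : Mty × Wty} (h : I.IsSemiWSNMWith M p)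
    (hq : IsMaxPair (M.erase p) q) : I.IsSemiWSNMWith (M.erase p) q := by
  obtain ⟨hM, hnc, hp, hbound⟩ := h
  refine ⟨hM.subset (M.erase_subset p), hnc.subset (M.erase_subset p), hq, fun m w hb => ?_⟩
  obtain ⟨hqp1, hqp2⟩ := hp.lt_of_erase hM hq
  by_contra hbeyond
  have hle : m ≤ q.1 ∧ w ≤ q.2 := by
    have hcross := hb.2 q hq.1
    simp only [Crossing, not_or, not_and, not_lt] at hcross
    rw [not_and_or, not_le, not_le] at hbeyond
    rcases hbeyond with h | h
    exacts [⟨h.le, hcross.1 h⟩, ⟨le_of_not_gt fun h' => (hcross.2 h').not_gt h, h.le⟩]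
  have hpmw := hbound m w (hb.of_erase_of_lt (hle.1.trans_lt hqp1) (hle.2.trans_lt hqp2))
  exact absurd (hpmw.1.trans hle.1) (not_le_of_gt hqp1)

theorem IsSemiWSNMWith.not_conflicting_erase_maxPair {nm nw : ℕ} {I : SMTI (Fin nm) (Fin nw)}
    {M : Finset (Fin nm × Fin nw)} {p q : Fin nm × Fin nw} (h : I.IsSemiWSNMWith M p)
    (hq : IsMaxPair (M.erase p) q) : ¬ I.Conflicting q p := by
  obtain ⟨hM, -, hp, hbound⟩ := h
  rintro ⟨s, t, hb, hqs, hsp, hqt, htp⟩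
  have hqst : q ≤ (s, t) := Prod.le_def.mpr ⟨hqs, hqt⟩
  have hbM : I.NCBlocks M s t := by
    refine ⟨hb.of_forall_mem fun r hr => mem_pair_of_isMaxPair_erase hM hq hqst hr,
      fun r hr => ?_⟩
    by_cases hrp : r = p
    · exact hrp ▸ not_crossing_of_le_s13 (Prod.le_def.mpr ⟨hsp, htp⟩)
    · exact not_crossing_of_ge
        ((Prod.le_def.mpr (hq.2 r (Finset.mem_erase.mpr ⟨hrp, hr⟩))).trans hqst)
  have hstp : (s, t) = p :=
    le_antisymm (Prod.le_def.mpr ⟨hsp, htp⟩) (hbound s t hbM)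
  exact hb.2.1 (by simp [hstp])

end SMTI

theorem stmt13_general {n : ℕ} (I' : SMTI (Fin n) (Fin n))
    (M : Finset (Fin (n + 2) × Fin (n + 2))) (p : Fin (n + 2) × Fin (n + 2))
    (h : (SMTI.padded I').IsSemiWSNMWith M p)
    (q : Fin (n + 2) × Fin (n + 2)) (hq : SMTI.IsMaxPair (M.erase p) q) :
    (SMTI.padded I').IsSemiWSNMWith (M.erase p) q ∧
      ¬ (SMTI.padded I').Conflicting q p :=
  ⟨h.erase_maxPair hq, h.not_conflicting_erase_maxPair hq⟩

/-- removing the maximum pair from a semi-WSNM of size at least 2 of the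
padded instance yields a semi-WSNM whose maximum pair is nonconflicting with the
removed pair. -/
theorem stmt13 {n : ℕ} (I' : SMTI (Fin n) (Fin n)) (hI' : I'.NoTies)
    (M : Finset (Fin (n + 2) × Fin (n + 2))) (p : Fin (n + 2) × Fin (n + 2))
    (h : (SMTI.padded I').IsSemiWSNMWith M p) (hcard : 2 ≤ M.card)
    (q : Fin (n + 2) × Fin (n + 2)) (hq : SMTI.IsMaxPair (M.erase p) q) :
    (SMTI.padded I').IsSemiWSNMWith (M.erase p) q ∧
      ¬ (SMTI.padded I').Conflicting q p :=
  stmt13_general I' M p h q hq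
end

section
/- Every SMTI instance admits at most one super-SSNM; i.e., if M and M' are both super-stable noncrossing matchings of the same SMTI instance, then M = M'. -/
open scoped Classical

namespace SMTI

variable {Mty Wty : Type}

/-- `(m, w)` is a super blocking pair for `M`: an acceptable pair not in `M` such that
both `m` and `w` weakly prefer each other to their situation in `M`. -/
def SuperBlocks (I : SMTI Mty Wty) (M : Finset (Mty × Wty)) (m : Mty) (w : Wty) : Prop :=
  I.Acc m w ∧ (m, w) ∉ M ∧
  (∀ w', (m, w') ∈ M → rk (I.mpref m w) ≤ rk (I.mpref m w')) ∧
  (∀ m', (m', w) ∈ M → rk (I.wpref w m) ≤ rk (I.wpref w m'))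

/-- `(m, w)` is a strong blocking pair for `M`: an acceptable pair not in `M` such that
one member weakly prefers and the other member strictly prefers the pair to their
situation in `M`. -/
def StrongBlocks (I : SMTI Mty Wty) (M : Finset (Mty × Wty)) (m : Mty) (w : Wty) : Prop :=
  I.Acc m w ∧ (m, w) ∉ M ∧
  (((∀ w', (m, w') ∈ M → rk (I.mpref m w) ≤ rk (I.mpref m w')) ∧
    (∀ m', (m', w) ∈ M → rk (I.wpref w m) < rk (I.wpref w m'))) ∨
   ((∀ w', (m, w') ∈ M → rk (I.mpref m w) < rk (I.mpref m w')) ∧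
    (∀ m', (m', w) ∈ M → rk (I.wpref w m) ≤ rk (I.wpref w m'))))

/-- A super-WSNM: a noncrossing matching with no noncrossing super blocking pair. -/
def IsSuperWSNM [Preorder Mty] [Preorder Wty] (I : SMTI Mty Wty)
    (M : Finset (Mty × Wty)) : Prop :=
  I.IsMatching M ∧ Noncrossing M ∧
    ∀ m w, ¬ (I.SuperBlocks M m w ∧ ∀ q ∈ M, ¬ Crossing (m, w) q)

/-- A strong-WSNM: a noncrossing matching with no noncrossing strong blocking pair. -/
def IsStrongWSNM [Preorder Mty] [Preorder Wty] (I : SMTI Mty Wty)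
    (M : Finset (Mty × Wty)) : Prop :=
  I.IsMatching M ∧ Noncrossing M ∧
    ∀ m w, ¬ (I.StrongBlocks M m w ∧ ∀ q ∈ M, ¬ Crossing (m, w) q)

/-- A super-SSNM: a noncrossing matching with no super blocking pair. -/
def IsSuperSSNM [Preorder Mty] [Preorder Wty] (I : SMTI Mty Wty)
    (M : Finset (Mty × Wty)) : Prop :=
  I.IsMatching M ∧ Noncrossing M ∧ ∀ m w, ¬ I.SuperBlocks M m w

/-- A strong-SSNM: a noncrossing matching with no strong blocking pair. -/
def IsStrongSSNM [Preorder Mty] [Preorder Wty] (I : SMTI Mty Wty)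
    (M : Finset (Mty × Wty)) : Prop :=
  I.IsMatching M ∧ Noncrossing M ∧ ∀ m w, ¬ I.StrongBlocks M m w

end SMTI

/-!
Let `M`, `M'` be super-SSNMs. If a man `m` strictly preferred his `M'`-partner `w'` to his
`M`-partner `w`, say with `w' < w`, then `(m, w')` would super-block `M` unless `w'` is held in
`M` by a man `m₁` she strictly prefers to `m`; noncrossing of `M` puts `m₁` above `m`. Then
`(m₁, w')` super-blocks `M'` unless `m₁` holds in `M'` a woman `w₁` he strictly prefers to `w'`,
and noncrossing of `M'` puts `w₁` above `w'`. This reproduces the situation with a strictly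
higher woman, which cannot go on forever. So every man weakly prefers his `M`-partner to his
`M'`-partner; a similar one-step argument gives the same for women, and then no pair of `M`
can be missing from `M'` without super-blocking it.
-/

theorem Finset.forall_not_of_forall_exists_lt {α β : Type*} [LinearOrder β] {s : Finset α}
    (f : α → β) {P : α → Prop} (h : ∀ a ∈ s, P a → ∃ b ∈ s, P b ∧ f b < f a) :
    ∀ a ∈ s, ¬ P a := by
  intro a ha hPa
  obtain ⟨b, hb, hmin⟩ := (s.filter P).exists_min_image f ⟨a, Finset.mem_filter.2 ⟨ha, hPa⟩⟩
  rw [Finset.mem_filter] at hb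
  obtain ⟨c, hc, hPc, hlt⟩ := h b hb.1 hb.2
  exact (hmin c (Finset.mem_filter.2 ⟨hc, hPc⟩)).not_gt hlt

namespace SMTI

variable {Mty Wty : Type} {I : SMTI Mty Wty} {M M' : Finset (Mty × Wty)}
  {m m' : Mty} {w w' : Wty}

theorem IsMatching.snd_eq (hM : I.IsMatching M) (h : (m, w) ∈ M) (h' : (m, w') ∈ M) :
    w = w' :=
  congrArg Prod.snd (hM.2 _ h _ h' (Or.inl rfl))

theorem IsMatching.fst_eq (hM : I.IsMatching M) (h : (m, w) ∈ M) (h' : (m', w) ∈ M) :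
    m = m' :=
  congrArg Prod.fst (hM.2 _ h _ h' (Or.inr rfl))

theorem exists_wpref_lt_of_not_superBlocks (h : ¬ I.SuperBlocks M m w) (hacc : I.Acc m w)
    (hnot : (m, w) ∉ M) (hm : ∀ w', (m, w') ∈ M → rk (I.mpref m w) ≤ rk (I.mpref m w')) :
    ∃ m', (m', w) ∈ M ∧ rk (I.wpref w m') < rk (I.wpref w m) := by
  by_contra hw
  push Not at hw
  exact h ⟨hacc, hnot, hm, hw⟩

theorem exists_mpref_lt_of_not_superBlocks (h : ¬ I.SuperBlocks M m w) (hacc : I.Acc m w)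
    (hnot : (m, w) ∉ M) (hw : ∀ m', (m', w) ∈ M → rk (I.wpref w m) ≤ rk (I.wpref w m')) :
    ∃ w', (m, w') ∈ M ∧ rk (I.mpref m w') < rk (I.mpref m w) := by
  by_contra hm
  push Not at hm
  exact h ⟨hacc, hnot, hm, hw⟩

theorem IsSuperSSNM.toDual [Preorder Mty] [Preorder Wty] (hM : I.IsSuperSSNM M) :
    IsSuperSSNM (Mty := Mtyᵒᵈ) (Wty := Wtyᵒᵈ) I M :=
  ⟨hM.1, fun p hp q hq hpq => hM.2.1 p hp q hq hpq.symm, hM.2.2⟩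

section LinearOrder

variable [LinearOrder Mty] [LinearOrder Wty] {p q : Mty × Wty}

theorem Noncrossing.fst_le_of_snd_lt (hM : Noncrossing M) (hp : p ∈ M) (hq : q ∈ M)
    (h : p.2 < q.2) : p.1 ≤ q.1 :=
  not_lt.1 fun h' => hM q hq p hp (Or.inl ⟨h', h⟩)

theorem Noncrossing.snd_le_of_fst_lt (hM : Noncrossing M) (hp : p ∈ M) (hq : q ∈ M)
    (h : p.1 < q.1) : p.2 ≤ q.2 :=
  not_lt.1 fun h' => hM p hp q hq (Or.inl ⟨h, h'⟩)

theorem IsSuperSSNM.exists_mpref_lt_of_snd_lt (hM : I.IsSuperSSNM M) (hM' : I.IsSuperSSNM M')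
    (hmw : (m, w) ∈ M) (hmw' : (m, w') ∈ M') (hrk : rk (I.mpref m w') < rk (I.mpref m w))
    (hlt : w' < w) :
    ∃ m₁ w₁, (m₁, w') ∈ M ∧ (m₁, w₁) ∈ M' ∧ rk (I.mpref m₁ w₁) < rk (I.mpref m₁ w') ∧
      w₁ < w' := by
  have hnot : (m, w') ∉ M := fun h => hlt.ne (hM.1.snd_eq h hmw)
  obtain ⟨m₁, hm₁, hrk₁⟩ := exists_wpref_lt_of_not_superBlocks (hM.2.2 m w')
    (hM'.1.1 _ hmw') hnot fun w₂ h => hM.1.snd_eq hmw h ▸ hrk.le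
  have hm₁m : m₁ < m := lt_of_le_of_ne (hM.2.1.fst_le_of_snd_lt hm₁ hmw hlt)
    (by rintro rfl; exact hnot hm₁)
  have hnot₁ : (m₁, w') ∉ M' := fun h => hm₁m.ne (hM'.1.fst_eq h hmw')
  obtain ⟨w₁, hw₁, hrk₁'⟩ := exists_mpref_lt_of_not_superBlocks (hM'.2.2 m₁ w')
    (hM.1.1 _ hm₁) hnot₁ fun m₂ h => hM'.1.fst_eq hmw' h ▸ hrk₁.le
  refine ⟨m₁, w₁, hm₁, hw₁, hrk₁', lt_of_le_of_ne (hM'.2.1.snd_le_of_fst_lt hw₁ hmw' hm₁m) ?_⟩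
  rintro rfl
  exact hnot₁ hw₁

theorem IsSuperSSNM.not_mpref_lt_of_snd_lt (hM : I.IsSuperSSNM M) (hM' : I.IsSuperSSNM M')
    (hmw : (m, w) ∈ M) (hmw' : (m, w') ∈ M') (hlt : w' < w) :
    ¬ rk (I.mpref m w') < rk (I.mpref m w) := fun hrk =>
  Finset.forall_not_of_forall_exists_lt Prod.snd
    (P := fun q => ∃ w, (q.1, w) ∈ M ∧ rk (I.mpref q.1 q.2) < rk (I.mpref q.1 w) ∧ q.2 < w)
    (fun _ hq ⟨_, hw, hrk, hlt⟩ =>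
      let ⟨m₁, w₁, hm₁, hw₁, hrk₁, hlt₁⟩ := hM.exists_mpref_lt_of_snd_lt hM' hw hq hrk hlt
      ⟨(m₁, w₁), hw₁, ⟨_, hm₁, hrk₁, hlt₁⟩, hlt₁⟩)
    _ hmw' ⟨w, hmw, hrk, hlt⟩

theorem IsSuperSSNM.rk_mpref_le (hM : I.IsSuperSSNM M) (hM' : I.IsSuperSSNM M')
    (hmw : (m, w) ∈ M) (hmw' : (m, w') ∈ M') : rk (I.mpref m w) ≤ rk (I.mpref m w') := by
  refine not_lt.1 fun hrk => ?_
  rcases lt_trichotomy w' w with h | rfl | h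
  · exact hM.not_mpref_lt_of_snd_lt hM' hmw hmw' h hrk
  · exact hrk.false
  · exact hM.toDual.not_mpref_lt_of_snd_lt hM'.toDual hmw hmw' h hrk

theorem IsSuperSSNM.rk_wpref_le (hM : I.IsSuperSSNM M) (hM' : I.IsSuperSSNM M')
    (hmw : (m, w) ∈ M) (hm'w : (m', w) ∈ M') : rk (I.wpref w m) ≤ rk (I.wpref w m') := by
  refine not_lt.1 fun hrk => ?_
  have hnot : (m', w) ∉ M := fun h => hrk.ne (by rw [hM.1.fst_eq h hmw])
  obtain ⟨w₁, hw₁, hrk₁⟩ := exists_mpref_lt_of_not_superBlocks (hM.2.2 m' w)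
    (hM'.1.1 _ hm'w) hnot fun m₂ h => hM.1.fst_eq hmw h ▸ hrk.le
  exact (hM'.rk_mpref_le hM hm'w hw₁).not_gt hrk₁

theorem IsSuperSSNM.subset (hM : I.IsSuperSSNM M) (hM' : I.IsSuperSSNM M') : M ⊆ M' := by
  rintro ⟨m, w⟩ hmw
  by_contra hnot
  obtain ⟨m', hm', hrk⟩ := exists_wpref_lt_of_not_superBlocks (hM'.2.2 m w) (hM.1.1 _ hmw)
    hnot fun _ h => hM.rk_mpref_le hM' hmw h
  exact (hM.rk_wpref_le hM' hmw hm').not_gt hrk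

end LinearOrder

end SMTI

/-- every SMTI instance admits at most one super-SSNM. -/
theorem stmt17 {n : ℕ} (I : SMTI (Fin n) (Fin n))
    (M M' : Finset (Fin n × Fin n))
    (hM : I.IsSuperSSNM M) (hM' : I.IsSuperSSNM M') :
    M = M' :=
  (hM.subset hM').antisymm (hM'.subset hM)
end
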